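/- Let M = {(x,y,z) ∈ ℝ³ : x² + y² − z² = −1, z > 0, (x,y,z) ≠ (0,0,1)}, let h(x,y,z) = (s·x, s·y, (z + √2)/2) with s = √((z² + 2√2·z − 2)/(4z² − 4)), let g(U,W) = u₁w₁ + u₂w₂ − u₃w₃ be the Minkowski form on ℝ³, and let C = {(x, y, √2) : x² + y² = 1}. For p = (x,y,√2) ∈ C write T_p = {(u,v,w) ∈ ℝ³ : xu + yv − √2 w = 0} for the tangent space to H²(1) at p, and Dh^[n]_p for the Fréchet derivative of the n-th iterate of h at p (which maps T_p to itself since h fixes p). Then C is NOT a hyperbolic set for h: there do not exist constants a > 0 and 0 < b < 1 and, for each p ∈ C, subspaces Eˢ(p), Eᵘ(p), Eⁿ(p) of T_p with T_p = Eˢ(p) ⊕ Eᵘ(p) ⊕ Eⁿ(p) (internal direct sum) such that: (i) every nonzero v ∈ Eˢ(p) ∪ Eᵘ(p) satisfies g(v,v) ≠ 0 and every v ∈ Eⁿ(p) satisfies g(v,v) = 0; (ii) Dh_p(Eˢ(p)) = Eˢ(p) and Dh_p(Eᵘ(p)) = Eᵘ(p); (iii) for every v ∈ Eˢ(p) and all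 n ∈ ℕ, |g(Dh^[n]_p v, Dh^[n]_p v)| ≤ a bⁿ |g(v,v)|, and g(Dh^[n]_p v, Dh^[n]_p w) → 0 as n → ∞ for every w ∈ T_p with |g(Dh^[n]_p w, Dh^[n]_p w)| ≤ a bⁿ |g(w,w)| for all n; (iv) for every v ∈ Eᵘ(p) and all n ∈ ℕ, a⁻¹ b⁻ⁿ |g(v,v)| ≤ |g(Dh^[n]_p v, Dh^[n]_p v)|. -/

import Mathlib

open Filter Topology

noncomputable section

/-- The Minkowski form on ℝ³. -/
def g3 (U V : ℝ × ℝ × ℝ) : ℝ := U.1 * V.1 + U.2.1 * V.2.1 - U.2.2 * V.2.2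

/-- The scaling factor s(z) = √((z² + 2√2 z − 2)/(4z² − 4)). -/
def sFac (z : ℝ) : ℝ :=
  Real.sqrt ((z ^ 2 + 2 * Real.sqrt 2 * z - 2) / (4 * z ^ 2 - 4))

/-- The map h(x,y,z) = (s(z)·x, s(z)·y, (z + √2)/2). -/
def h3 (p : ℝ × ℝ × ℝ) : ℝ × ℝ × ℝ :=
  (sFac p.2.2 * p.1, sFac p.2.2 * p.2.1, (p.2.2 + Real.sqrt 2) / 2)

/-- The circle C = {(x, y, √2) : x² + y² = 1}. -/
def C3 : Set (ℝ × ℝ × ℝ) :=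
  {p | p.1 ^ 2 + p.2.1 ^ 2 = 1 ∧ p.2.2 = Real.sqrt 2}

/-- The tangent space to the hyperboloid H²(1) at a point p = (x,y,√2) of C,
viewed as a subspace of ℝ³: {(u,v,w) : xu + yv − √2 w = 0}. -/
def Tp (p : ℝ × ℝ × ℝ) : Submodule ℝ (ℝ × ℝ × ℝ) where
  carrier := {V | p.1 * V.1 + p.2.1 * V.2.1 - Real.sqrt 2 * V.2.2 = 0}
  add_mem' := by
    intro a b ha hb
    simp only [Set.mem_setOf_eq, Prod.fst_add, Prod.snd_add] at *
    linear_combination ha + hb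
  zero_mem' := by simp
  smul_mem' := by
    intro c V hV
    simp only [Set.mem_setOf_eq, Prod.smul_fst, Prod.smul_snd, smul_eq_mul] at *
    linear_combination c * hV

/-! ### Auxiliary lemmas -/

lemma s2_sq : Real.sqrt 2 ^ 2 = 2 := Real.sq_sqrt (by norm_num)
lemma s2_mul : Real.sqrt 2 * Real.sqrt 2 = 2 := Real.mul_self_sqrt (by norm_num)

lemma ratio_val :
    (Real.sqrt 2 ^ 2 + 2 * Real.sqrt 2 * Real.sqrt 2 - 2) / (4 * Real.sqrt 2 ^ 2 - 4) = 1 := by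
  rw [s2_sq, mul_assoc, s2_mul]; norm_num

lemma sFac_s2 : sFac (Real.sqrt 2) = 1 := by
  unfold sFac; rw [ratio_val, Real.sqrt_one]

lemma hasDerivAt_sFac : HasDerivAt sFac (-(Real.sqrt 2) / 2) (Real.sqrt 2) := by
  have hpow : HasDerivAt (fun z : ℝ => z ^ 2) (2 * Real.sqrt 2) (Real.sqrt 2) := by
    simpa using hasDerivAt_pow 2 (Real.sqrt 2)
  have h2' : HasDerivAt (fun z : ℝ => 2 * Real.sqrt 2 * z) (2 * Real.sqrt 2) (Real.sqrt 2) := by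
    simpa using (hasDerivAt_id (Real.sqrt 2)).const_mul (2 * Real.sqrt 2)
  have hN : HasDerivAt (fun z : ℝ => z ^ 2 + 2 * Real.sqrt 2 * z - 2)
      (2 * Real.sqrt 2 + 2 * Real.sqrt 2) (Real.sqrt 2) := (hpow.add h2').sub_const 2
  have hD : HasDerivAt (fun z : ℝ => 4 * z ^ 2 - 4) (4 * (2 * Real.sqrt 2)) (Real.sqrt 2) := by
    simpa using (hpow.const_mul 4).sub_const 4
  have hr := hN.div hD (by rw [s2_sq]; norm_num)
  have hs := hr.sqrt (by
    show (Real.sqrt 2 ^ 2 + 2 * Real.sqrt 2 * Real.sqrt 2 - 2) / (4 * Real.sqrt 2 ^ 2 - 4) ≠ 0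
    rw [ratio_val]; norm_num)
  unfold sFac
  convert hs using 1
  · rfl
  simp only [Pi.div_apply, ratio_val, Real.sqrt_one]
  rw [s2_sq, mul_assoc, s2_mul]
  ring

def pi1 : (ℝ × ℝ × ℝ) →L[ℝ] ℝ := ContinuousLinearMap.fst ℝ ℝ (ℝ × ℝ)
def pi2 : (ℝ × ℝ × ℝ) →L[ℝ] ℝ :=
  (ContinuousLinearMap.fst ℝ ℝ ℝ).comp (ContinuousLinearMap.snd ℝ ℝ (ℝ × ℝ))
def pi3 : (ℝ × ℝ × ℝ) →L[ℝ] ℝ :=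
  (ContinuousLinearMap.snd ℝ ℝ ℝ).comp (ContinuousLinearMap.snd ℝ ℝ (ℝ × ℝ))

/-- The derivative of `h3` at the base point `(1, 0, √2)`. -/
def Lp : (ℝ × ℝ × ℝ) →L[ℝ] ℝ × ℝ × ℝ :=
  (pi1 - (Real.sqrt 2 / 2) • pi3).prod (pi2.prod ((2⁻¹ : ℝ) • pi3))

lemma Lp_apply (V : ℝ × ℝ × ℝ) :
    Lp V = (V.1 - Real.sqrt 2 / 2 * V.2.2, V.2.1, 2⁻¹ * V.2.2) := rfl

/-- The base point `(1, 0, √2)` of the circle. -/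
def pp : ℝ × ℝ × ℝ := ((1 : ℝ), (0 : ℝ), Real.sqrt 2)

lemma h3_fix : h3 pp = pp := by
  unfold h3 pp
  simp [sFac_s2]

lemma hasFDerivAt_h3 : HasFDerivAt h3 Lp pp := by
  have hpi3 : HasFDerivAt (fun q : ℝ × ℝ × ℝ => q.2.2) pi3 pp := pi3.hasFDerivAt
  have hA : HasFDerivAt (fun q : ℝ × ℝ × ℝ => sFac q.2.2)
      ((-(Real.sqrt 2) / 2) • pi3) pp :=
    by have := hasDerivAt_sFac.comp_hasFDerivAt (h₂ := sFac) pp hpi3; exact this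
  have h1 : HasFDerivAt (fun q : ℝ × ℝ × ℝ => sFac q.2.2 * q.1) _ pp :=
    hA.mul pi1.hasFDerivAt
  have h2 : HasFDerivAt (fun q : ℝ × ℝ × ℝ => sFac q.2.2 * q.2.1) _ pp :=
    hA.mul pi2.hasFDerivAt
  have h3' : HasFDerivAt (fun q : ℝ × ℝ × ℝ => (q.2.2 + Real.sqrt 2) / 2)
      ((2⁻¹ : ℝ) • pi3) pp := by
    have hm : HasFDerivAt (fun q : ℝ × ℝ × ℝ => 2⁻¹ * (q.2.2 + Real.sqrt 2))
        ((2⁻¹ : ℝ) • pi3) pp := by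
      simpa using (hpi3.add_const (Real.sqrt 2)).const_mul (2⁻¹ : ℝ)
    exact hm.congr_of_eventuallyEq (by filter_upwards with q; rw [div_eq_inv_mul])
  have hd := h1.prodMk (h2.prodMk h3')
  have hh : HasFDerivAt h3 _ pp := hd
  refine hh.congr_fderiv ?_
  ext V <;>
    simp [Lp, pp, pi1, pi2, pi3, sFac_s2, ContinuousLinearMap.prod_apply] <;> ring

lemma fderiv_h3_iter (n : ℕ) : fderiv ℝ (h3^[n]) pp = Lp ^ n :=
  (hasFDerivAt_h3.iterate h3_fix n).fderiv

lemma Lp_pow_apply (n : ℕ) (V : ℝ × ℝ × ℝ) :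
    (Lp ^ n) V = (V.1 - Real.sqrt 2 * (1 - (2⁻¹ : ℝ) ^ n) * V.2.2, V.2.1,
      (2⁻¹ : ℝ) ^ n * V.2.2) := by
  induction n with
  | zero => simp
  | succ n ih =>
    rw [pow_succ', ContinuousLinearMap.mul_apply, ih, Lp_apply]
    refine Prod.ext ?_ (Prod.ext ?_ ?_) <;> simp <;> ring

/-- Example 4.1 conclusion. -/
theorem C3_not_hyperbolic :
    ¬ ∃ (a b : ℝ) (Es Eu En : (ℝ × ℝ × ℝ) → Submodule ℝ (ℝ × ℝ × ℝ)),
      0 < a ∧ 0 < b ∧ b < 1 ∧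
      ∀ p ∈ C3,
        (Es p ⊓ Eu p = ⊥ ∧ (Es p ⊔ Eu p) ⊓ En p = ⊥ ∧ Es p ⊔ Eu p ⊔ En p = Tp p) ∧
        (∀ v ∈ Es p, v ≠ 0 → g3 v v ≠ 0) ∧
        (∀ v ∈ Eu p, v ≠ 0 → g3 v v ≠ 0) ∧
        (∀ v ∈ En p, g3 v v = 0) ∧
        Submodule.map (fderiv ℝ h3 p : (ℝ × ℝ × ℝ) →ₗ[ℝ] (ℝ × ℝ × ℝ)) (Es p) = Es p ∧
        Submodule.map (fderiv ℝ h3 p : (ℝ × ℝ × ℝ) →ₗ[ℝ] (ℝ × ℝ × ℝ)) (Eu p) = Eu p ∧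
        (∀ v ∈ Es p,
          (∀ n : ℕ, |g3 (fderiv ℝ (h3^[n]) p v) (fderiv ℝ (h3^[n]) p v)| ≤
            a * b ^ n * |g3 v v|) ∧
          (∀ w ∈ Tp p,
            (∀ n : ℕ, |g3 (fderiv ℝ (h3^[n]) p w) (fderiv ℝ (h3^[n]) p w)| ≤
              a * b ^ n * |g3 w w|) →
            Tendsto (fun n => g3 (fderiv ℝ (h3^[n]) p v) (fderiv ℝ (h3^[n]) p w))
              atTop (𝓝 0))) ∧
        (∀ v ∈ Eu p, ∀ n : ℕ,
          a⁻¹ * (b ^ n)⁻¹ * |g3 v v| ≤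
            |g3 (fderiv ℝ (h3^[n]) p v) (fderiv ℝ (h3^[n]) p v)|) := by
  rintro ⟨a, b, Es, Eu, En, ha, hb, hb1, H⟩
  have hpC : pp ∈ C3 := ⟨by norm_num [pp], rfl⟩
  obtain ⟨⟨-, -, hsum⟩, -, hEune, hEn0, -, -, hstab, hunst⟩ := H pp hpC
  -- tangent vectors at pp satisfy V.1 = √2 · V.2.2
  have hTp : ∀ V : ℝ × ℝ × ℝ, V ∈ Tp pp → V.1 = Real.sqrt 2 * V.2.2 := by
    intro V hV
    have h : pp.1 * V.1 + pp.2.1 * V.2.1 - Real.sqrt 2 * V.2.2 = 0 := hV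
    simp only [pp] at h
    linarith
  have gval : ∀ V : ℝ × ℝ × ℝ, V ∈ Tp pp → g3 V V = V.2.1 ^ 2 + V.2.2 ^ 2 := by
    intro V hV
    unfold g3
    rw [hTp V hV]
    linear_combination V.2.2 ^ 2 * s2_sq
  have gpow : ∀ V : ℝ × ℝ × ℝ, V ∈ Tp pp → ∀ n : ℕ,
      g3 ((Lp ^ n) V) ((Lp ^ n) V) = V.2.1 ^ 2 + ((2 : ℝ)⁻¹ ^ n) ^ 2 * V.2.2 ^ 2 := by
    intro V hV n
    rw [Lp_pow_apply]
    unfold g3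
    simp only
    rw [hTp V hV]
    linear_combination (((2 : ℝ)⁻¹ ^ n) ^ 2 * V.2.2 ^ 2) * s2_sq
  have hEuTp : Eu pp ≤ Tp pp := by
    rw [← hsum]; exact le_sup_of_le_left le_sup_right
  have hEnTp : En pp ≤ Tp pp := by rw [← hsum]; exact le_sup_right
  -- the null subspace is trivial
  have hEn_bot : En pp = ⊥ := by
    rw [eq_bot_iff]
    intro V hV
    have h0 : g3 V V = 0 := hEn0 V hV
    have h1 := gval V (hEnTp hV)
    have h21 : V.2.1 = 0 := by nlinarith [sq_nonneg V.2.1, sq_nonneg V.2.2]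
    have h22 : V.2.2 = 0 := by nlinarith [sq_nonneg V.2.1, sq_nonneg V.2.2]
    have h11 : V.1 = 0 := by rw [hTp V (hEnTp hV), h22]; ring
    simp only [Submodule.mem_bot]
    exact Prod.ext h11 (Prod.ext h21 h22)
  -- the unstable subspace is trivial
  have hEu_bot : Eu pp = ⊥ := by
    rw [eq_bot_iff]
    intro V hV
    simp only [Submodule.mem_bot]
    by_contra hV0
    have hg : g3 V V ≠ 0 := hEune V hV hV0
    have hgv := gval V (hEuTp hV)
    have hge : 0 ≤ g3 V V := by rw [hgv]; positivity
    have hgpos : 0 < g3 V V := lt_of_le_of_ne hge (Ne.symm hg)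
    obtain ⟨n, hn⟩ := exists_pow_lt_of_lt_one (inv_pos.mpr ha) hb1
    have hub := hunst V hV n
    rw [fderiv_h3_iter n] at hub
    have hqle : ((2 : ℝ)⁻¹ ^ n) ^ 2 ≤ 1 := by
      have h1 : ((2 : ℝ)⁻¹ ^ n) ≤ 1 := pow_le_one₀ (by norm_num) (by norm_num)
      have h2 : (0 : ℝ) ≤ (2 : ℝ)⁻¹ ^ n := pow_nonneg (by norm_num) n
      nlinarith
    have hle : g3 ((Lp ^ n) V) ((Lp ^ n) V) ≤ g3 V V := by
      rw [gpow V (hEuTp hV) n, hgv]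
      nlinarith [sq_nonneg V.2.2]
    have habs : |g3 ((Lp ^ n) V) ((Lp ^ n) V)| = g3 ((Lp ^ n) V) ((Lp ^ n) V) := by
      rw [abs_of_nonneg]
      rw [gpow V (hEuTp hV) n]
      positivity
    rw [habs, abs_of_pos hgpos] at hub
    have hbn : (0 : ℝ) < b ^ n := pow_pos hb n
    have h1 : a * b ^ n < 1 := by
      calc a * b ^ n < a * a⁻¹ := by exact mul_lt_mul_of_pos_left hn ha
        _ = 1 := mul_inv_cancel₀ (ne_of_gt ha)
    have key : a⁻¹ * (b ^ n)⁻¹ * g3 V V ≤ g3 V V := le_trans hub hle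
    have hmul : a * b ^ n * (a⁻¹ * (b ^ n)⁻¹ * g3 V V) = g3 V V := by
      field_simp
    nlinarith [mul_le_mul_of_nonneg_left key (le_of_lt (mul_pos ha hbn))]
  -- hence the stable subspace is everything
  have hEs : Es pp = Tp pp := by
    rw [← hsum, hEu_bot, hEn_bot, sup_bot_eq, sup_bot_eq]
  -- the circle direction is fixed by the derivative, contradicting decay
  have hvcT : ((0 : ℝ), (1 : ℝ), (0 : ℝ)) ∈ Tp pp := by
    show pp.1 * (0 : ℝ) + pp.2.1 * 1 - Real.sqrt 2 * 0 = 0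
    simp [pp]
  have hvcS : ((0 : ℝ), (1 : ℝ), (0 : ℝ)) ∈ Es pp := by rw [hEs]; exact hvcT
  obtain ⟨n, hn⟩ := exists_pow_lt_of_lt_one (inv_pos.mpr ha) hb1
  have hst := (hstab _ hvcS).1 n
  rw [fderiv_h3_iter n, Lp_pow_apply] at hst
  norm_num [g3] at hst
  have h1 : a * b ^ n < 1 := by
    calc a * b ^ n < a * a⁻¹ := by exact mul_lt_mul_of_pos_left hn ha
      _ = 1 := mul_inv_cancel₀ (ne_of_gt ha)
  linarith
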